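/- arXiv:2409.05248 — 4 statements merged into one kernel-verified Lean document; each statement's English description precedes it below -/
import Mathlib

section
/- Let f ∈ F_q[x_0,...,x_n] be a nonzero homogeneous polynomial of degree q+1 whose zero set in P^n contains all F_q-rational points, and suppose the corresponding hypersurface S_f is smooth. If L is a line of P^n defined over F_q that is tangent to S_f at some point, then L is entirely contained in S_f. -/
open MvPolynomial

/-- Evaluation over the algebraic closure of a polynomial with coefficients in `F`. -/
noncomputable def evalK (F : Type*) [Field F] {m : ℕ} (g : MvPolynomial (Fin m) F)
    (v : Fin m → AlgebraicClosure F) : AlgebraicClosure F :=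
  eval v (map (algebraMap F (AlgebraicClosure F)) g)

/-- The point `s·a + t·b` of the algebraic-closure points of the `F_q`-line spanned by `a, b`. -/
noncomputable def linePt (F : Type*) [Field F] {m : ℕ} (a b : Fin m → F)
    (s t : AlgebraicClosure F) : Fin m → AlgebraicClosure F :=
  fun i => s * algebraMap F (AlgebraicClosure F) (a i) +
    t * algebraMap F (AlgebraicClosure F) (b i)

/-- The hypersurface defined by `g` is smooth: the gradient does not vanish at any
nonzero point of the affine cone over the algebraic closure. -/
def SmoothHyp (F : Type*) [Field F] {m : ℕ} (g : MvPolynomial (Fin m) F) : Prop :=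
  ∀ v : Fin m → AlgebraicClosure F, v ≠ 0 → evalK F g v = 0 →
    ∃ i, evalK F (pderiv i g) v ≠ 0

/-- The hypersurface defined by `g` contains every `F_q`-rational point. -/
def SpaceFilling (F : Type*) [Field F] {m : ℕ} (g : MvPolynomial (Fin m) F) : Prop :=
  ∀ v : Fin m → F, eval v g = 0

/-- The `F_q`-line spanned by `a, b` is tangent to the hypersurface of `g`: at some point
of the line lying on the hypersurface, either the point is singular, or the whole line lies
in the tangent hyperplane there. -/
noncomputable def TangentLine (F : Type*) [Field F] {m : ℕ} (g : MvPolynomial (Fin m) F)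
    (a b : Fin m → F) : Prop :=
  ∃ s t : AlgebraicClosure F, (s ≠ 0 ∨ t ≠ 0) ∧ evalK F g (linePt F a b s t) = 0 ∧
    ((∀ i, evalK F (pderiv i g) (linePt F a b s t) = 0) ∨
      ((∑ j, evalK F (pderiv j g) (linePt F a b s t) *
          algebraMap F (AlgebraicClosure F) (a j)) = 0 ∧
       (∑ j, evalK F (pderiv j g) (linePt F a b s t) *
          algebraMap F (AlgebraicClosure F) (b j)) = 0))

/-- The `F_q`-line spanned by `a, b` is entirely contained in the hypersurface of `g`. -/
noncomputable def ContainedLine (F : Type*) [Field F] {m : ℕ} (g : MvPolynomial (Fin m) F)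
    (a b : Fin m → F) : Prop :=
  ∀ s t : AlgebraicClosure F, evalK F g (linePt F a b s t) = 0

/-!
Assume `t₀ ≠ 0` (otherwise swap `a` and `b`) and restrict `f` to the affine chart
`s ↦ s a + t₀ b` of the line. The result has degree at most `q`, because its coefficient of
`s^(q+1)` is `f(a) = 0`. It vanishes at the `q` parameters `s = t₀ c`, `c ∈ F_q`, which are the
rational points `c a + b`, and tangency makes the parameter `s₀` of the point of tangency a double
root. Having `q + 1` roots with multiplicity, it is zero, and homogeneity spreads the vanishing
from the chart to the whole line.
-/

namespace Polynomial

theorem coeff_prod_sum_of_natDegree_le {R ι : Type*} [CommSemiring R] (s : Finset ι)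
    (g : ι → R[X]) (n : ι → ℕ) (h : ∀ i ∈ s, (g i).natDegree ≤ n i) :
    (∏ i ∈ s, g i).coeff (∑ i ∈ s, n i) = ∏ i ∈ s, (g i).coeff (n i) := by
  induction s using Finset.cons_induction with
  | empty => simp
  | cons a s _ ih =>
    simp only [Finset.forall_mem_cons] at h
    rw [Finset.prod_cons, Finset.sum_cons, Finset.prod_cons,
      coeff_mul_add_eq_of_natDegree_le h.1
        ((natDegree_prod_le _ _).trans (Finset.sum_le_sum h.2)), ih h.2]

theorem card_add_one_le_natDegree_of_one_lt_rootMultiplicity {R : Type*} [CommRing R]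
    [IsDomain R] {P : R[X]} (hP : P ≠ 0) {S : Finset R} (hS : ∀ y ∈ S, P.IsRoot y) {x : R}
    (hx : 1 < P.rootMultiplicity x) :
    S.card + 1 ≤ P.natDegree := by
  classical
  have hle : S.val + {x} ≤ P.roots := by
    refine Multiset.le_iff_count.2 fun y => ?_
    rw [count_roots, Multiset.count_add, Multiset.count_singleton,
      Multiset.count_eq_of_nodup S.nodup]
    split_ifs with hyS hyx hyx
    · subst hyx; omega
    · exact (rootMultiplicity_pos hP).2 (hS y hyS)
    · subst hyx; omega
    · exact Nat.zero_le _
  simpa using (Multiset.card_le_card hle).trans (card_roots' P)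

end Polynomial

namespace MvPolynomial

variable {R σ : Type*}

section CommSemiring

variable [CommSemiring R]

noncomputable def restrictLine (α β : σ → R) : MvPolynomial σ R →ₐ[R] Polynomial R :=
  aeval fun j => Polynomial.C (α j) * Polynomial.X + Polynomial.C (β j)

variable (α β : σ → R)

@[simp]
theorem restrictLine_X (j : σ) :
    restrictLine α β (X j) = Polynomial.C (α j) * Polynomial.X + Polynomial.C (β j) :=
  aeval_X _ j

theorem eval_restrictLine (p : MvPolynomial σ R) (s : R) :
    (restrictLine α β p).eval s = eval (s • α + β) p := by
  rw [restrictLine, ← Polynomial.coe_aeval_eq_eval, comp_aeval_apply, aeval_eq_eval]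
  congr 2
  funext j
  simp only [map_add, map_mul, Polynomial.aeval_C, Polynomial.aeval_X, Pi.add_apply,
    Pi.smul_apply, smul_eq_mul, Algebra.algebraMap_self, RingHom.id_apply, mul_comm]

theorem derivative_restrictLine [Fintype σ] (p : MvPolynomial σ R) :
    Polynomial.derivative (restrictLine α β p) =
      ∑ j, restrictLine α β (pderiv j p) * Polynomial.C (α j) := by
  classical
  induction p using MvPolynomial.induction_on with
  | C r => simp [restrictLine]
  | add p q hp hq => simp only [map_add, hp, hq, add_mul, Finset.sum_add_distrib]
  | mul_X p i hp =>
    simp only [map_mul, Derivation.leibniz, pderiv_X, smul_eq_mul, map_add, restrictLine_X,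
      Polynomial.derivative_mul, hp, add_mul, Finset.sum_add_distrib, Finset.sum_mul]
    simp only [Polynomial.derivative_C, Polynomial.derivative_X, Pi.single_apply,
      MonoidWithZeroHom.map_ite_one_zero, mul_ite, ite_mul, zero_mul, mul_zero, mul_one, zero_add,
      add_zero, Finset.sum_ite_eq, Finset.mem_univ, ↓reduceIte]
    rw [add_comm, ← Finset.sum_add_distrib]
    exact congrArg _ (Finset.sum_congr rfl fun j _ => by ring)

variable {α β} {p : MvPolynomial σ R} {d : ℕ}

theorem IsHomogeneous.eval_smul (hp : p.IsHomogeneous d) (c : R) (v : σ → R) :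
    eval (c • v) p = c ^ d * eval v p := by
  rw [eval_eq, eval_eq, Finset.mul_sum]
  refine Finset.sum_congr rfl fun e he => ?_
  rw [hp.degree_eq_sum_deg_support he]
  simp only [Pi.smul_apply, smul_eq_mul, mul_pow, Finset.prod_mul_distrib,
    Finset.prod_pow_eq_pow_sum]
  ring

theorem IsHomogeneous.natDegree_restrictLine_le (hp : p.IsHomogeneous d) :
    (restrictLine α β p).natDegree ≤ d := by
  rw [restrictLine, aeval_def, eval₂_eq]
  refine Polynomial.natDegree_sum_le_of_forall_le _ _ fun e he => ?_
  refine (Polynomial.natDegree_C_mul_le _ _).trans ?_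
  rw [hp.degree_eq_sum_deg_support he]
  refine (Polynomial.natDegree_prod_le _ _).trans (Finset.sum_le_sum fun j _ => ?_)
  simpa using Polynomial.natDegree_pow_le_of_le (e j) Polynomial.natDegree_linear_le

theorem IsHomogeneous.coeff_restrictLine (hp : p.IsHomogeneous d) :
    (restrictLine α β p).coeff d = eval α p := by
  rw [restrictLine, aeval_def, eval₂_eq, eval_eq, Polynomial.finsetSum_coeff]
  refine Finset.sum_congr rfl fun e he => ?_
  rw [Polynomial.algebraMap_eq, Polynomial.coeff_C_mul, hp.degree_eq_sum_deg_support he,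
    Polynomial.coeff_prod_sum_of_natDegree_le _ _ _ fun j _ =>
      (Polynomial.natDegree_pow_le_of_le (e j) Polynomial.natDegree_linear_le).trans_eq (mul_one _)]
  congr 1
  refine Finset.prod_congr rfl fun j _ => ?_
  simpa using Polynomial.coeff_pow_of_natDegree_le (m := e j)
    (Polynomial.natDegree_linear_le (a := α j) (b := β j))

end CommSemiring

theorem IsHomogeneous.restrictLine_eq_zero {K : Type*} [CommRing K] [IsDomain K] [Fintype σ]
    {p : MvPolynomial σ K} {d : ℕ} (hp : p.IsHomogeneous d) {α β : σ → K}
    (hα : eval α p = 0) {S : Finset K} (hS : d ≤ S.card + 1)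
    (hroots : ∀ s ∈ S, eval (s • α + β) p = 0) {x : K} (hx : eval (x • α + β) p = 0)
    (hx' : ∑ j, eval (x • α + β) (pderiv j p) * α j = 0) :
    restrictLine α β p = 0 := by
  by_contra hP
  have hdouble : 1 < (restrictLine α β p).rootMultiplicity x := by
    refine (Polynomial.one_lt_rootMultiplicity_iff_isRoot hP).2 ⟨?_, ?_⟩
    · rwa [Polynomial.IsRoot, eval_restrictLine]
    · rw [Polynomial.IsRoot, derivative_restrictLine, Polynomial.eval_finsetSum]
      simpa only [Polynomial.eval_mul, Polynomial.eval_C, eval_restrictLine] using hx'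
  have hdeg : (restrictLine α β p).natDegree < d := by
    refine hp.natDegree_restrictLine_le.lt_of_ne fun h => hP ?_
    rw [← Polynomial.leadingCoeff_eq_zero, Polynomial.leadingCoeff, h, hp.coeff_restrictLine, hα]
  have := Polynomial.card_add_one_le_natDegree_of_one_lt_rootMultiplicity hP
    (fun s hs => (eval_restrictLine α β p s).trans (hroots s hs)) hdouble
  omega

theorem IsHomogeneous.eval_smul_add_smul_eq_zero {K : Type*} [Field K] {p : MvPolynomial σ K}
    {d : ℕ} (hp : p.IsHomogeneous d) {α β : σ → K} (hα : eval α p = 0) {t₀ : K}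
    (ht₀ : t₀ ≠ 0) (hline : restrictLine α (t₀ • β) p = 0) (s t : K) :
    eval (s • α + t • β) p = 0 := by
  rcases eq_or_ne t 0 with rfl | ht
  · rw [zero_smul, add_zero, hp.eval_smul, hα, mul_zero]
  · have hv : s • α + t • β = (t / t₀) • ((s * t₀ / t) • α + t₀ • β) := by
      ext j
      simp only [Pi.add_apply, Pi.smul_apply, smul_eq_mul]
      field_simp
    rw [hv, hp.eval_smul, ← eval_restrictLine, hline, Polynomial.eval_zero, mul_zero]

end MvPolynomial

section SpaceFilling

variable {F : Type*} [Field F] {m : ℕ} {f : MvPolynomial (Fin m) F} {a b : Fin m → F}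

theorem linePt_eq_smul_add_smul (s t : AlgebraicClosure F) :
    linePt F a b s t =
      s • (algebraMap F (AlgebraicClosure F) ∘ a) +
        t • (algebraMap F (AlgebraicClosure F) ∘ b) :=
  rfl

theorem linePt_comm (s t : AlgebraicClosure F) : linePt F a b s t = linePt F b a t s :=
  funext fun _ => add_comm _ _

theorem containedLine_comm : ContainedLine F f a b ↔ ContainedLine F f b a := by
  simp only [ContainedLine, linePt_comm (a := a)]
  exact ⟨fun h s t => h t s, fun h s t => h t s⟩

theorem SpaceFilling.eval_map_algebraMap (hfill : SpaceFilling F f) (v : Fin m → F) :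
    eval (algebraMap F (AlgebraicClosure F) ∘ v)
      (map (algebraMap F (AlgebraicClosure F)) f) = 0 := by
  rw [eval_map, ← eval₂_comp, hfill v, map_zero]

theorem SpaceFilling.containedLine_of_tangent [Fintype F] {q : ℕ} (hq : Fintype.card F = q)
    (hhom : f.IsHomogeneous (q + 1)) (hfill : SpaceFilling F f) {s₀ t₀ : AlgebraicClosure F}
    (ht₀ : t₀ ≠ 0) (h0 : evalK F f (linePt F a b s₀ t₀) = 0)
    (ha : ∑ j, evalK F (pderiv j f) (linePt F a b s₀ t₀) * algebraMap F _ (a j) = 0) :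
    ContainedLine F f a b := by
  classical
  set ι := algebraMap F (AlgebraicClosure F)
  have hg := hhom.map ι
  have hα := hfill.eval_map_algebraMap a
  have hline : restrictLine (ι ∘ a) (t₀ • (ι ∘ b)) (map ι f) = 0 := by
    refine hg.restrictLine_eq_zero hα (S := Finset.univ.image fun c => t₀ * ι c) ?_ ?_ h0 ?_
    · rw [Finset.card_image_of_injective _ fun c c' h => ι.injective (mul_left_cancel₀ ht₀ h),
        Finset.card_univ, hq]
    · simp only [Finset.mem_image, Finset.mem_univ, true_and, forall_exists_index]
      rintro _ c rfl
      have hpt : (t₀ * ι c) • (ι ∘ a) + t₀ • (ι ∘ b) = t₀ • (ι ∘ (c • a + b)) := by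
        ext j
        simp only [Pi.add_apply, Pi.smul_apply, Function.comp_apply, smul_eq_mul, map_add,
          map_mul]
        ring
      rw [hpt, hg.eval_smul, hfill.eval_map_algebraMap, mul_zero]
    · simpa only [evalK, pderiv_map, linePt_eq_smul_add_smul, Function.comp_apply] using ha
  exact fun s t => hg.eval_smul_add_smul_eq_zero hα ht₀ hline s t

end SpaceFilling

theorem tangentLineContained_general (q n : ℕ) (F : Type*) [Field F] [Fintype F]
    (hq : Fintype.card F = q)
    (f : MvPolynomial (Fin (n + 1)) F) (hhom : f.IsHomogeneous (q + 1))
    (hfill : SpaceFilling F f)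
    (a b : Fin (n + 1) → F)
    (htan : TangentLine F f a b) :
    ContainedLine F f a b := by
  obtain ⟨s₀, t₀, hst, h0, htang⟩ := htan
  obtain ⟨ha, hb⟩ := htang.elim (fun hsing => by simp [hsing]) id
  rcases hst with hs₀ | ht₀
  · rw [linePt_comm] at h0 hb
    exact containedLine_comm.2 (hfill.containedLine_of_tangent hq hhom hs₀ h0 hb)
  · exact hfill.containedLine_of_tangent hq hhom ht₀ h0 ha

/-- If a smooth space-filling hypersurface of degree `q+1` in `ℙⁿ` over `F_q`
is tangent to an `F_q`-line at some point, then the line is contained in the hypersurface. -/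
theorem tangentLineContained (q n : ℕ) (F : Type*) [Field F] [Fintype F]
    (hq : Fintype.card F = q)
    (f : MvPolynomial (Fin (n + 1)) F) (hf0 : f ≠ 0) (hhom : f.IsHomogeneous (q + 1))
    (hfill : SpaceFilling F f) (hsm : SmoothHyp F f)
    (a b : Fin (n + 1) → F) (hab : LinearIndependent F ![a, b])
    (htan : TangentLine F f a b) :
    ContainedLine F f a b :=
  tangentLineContained_general q n F hq f hhom hfill a b htan
end

section
/- No smooth space-filling hypersurface of degree q+1 in P^n over F_q is line-transverse-free; that is, for every such hypersurface there exists an F_q-line transverse to it. -/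
open MvPolynomial

/-!
Restrict `f` to the line through `b` in direction `a`: `p(u) = f(u a + b)` has degree `≤ q + 1`,
its `u^(q+1)`-coefficient is `f(a) = 0`, and it vanishes on all of `F_q`, so
`p = c (u^q - u)` for a constant `c ∈ F_q`. Since `q = 0` in `F_q`, the chain rule gives
`∂_a f(u a + b) = p'(u) = -c`, and Euler's identity `∑ x_j ∂_j f = (q + 1) f = f` then gives
`∑ b_j ∂_j f(u a + b) = c u^q`, whose top coefficient is `∂_b f(a) = c`. The partials are
homogeneous of degree `q`, so if `c ≠ 0`, at every point `s a + t b` of the line `∂_a f` (when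
`t ≠ 0`) or `∂_b f` (when `t = 0`) is nonzero, and the line is not tangent. Smoothness at a
rational point `b` gives `∂_i f(b) ≠ 0` for some `i`, and `a = e_i` yields `c = -∂_i f(b) ≠ 0`.
A non-tangent line is spanned by independent vectors, since otherwise it passes through the
origin, where `f` and its partials vanish.
-/

open scoped Polynomial

theorem Finsupp.prod_map_toMultiset {σ M : Type*} [CommMonoid M] (e : σ →₀ ℕ) (x : σ → M) :
    (e.toMultiset.map x).prod = e.prod fun j k => x j ^ k := by
  rw [Finsupp.toMultiset_map, Finsupp.prod_toMultiset,
    Finsupp.prod_mapDomain_index (fun _ => pow_zero _) (fun _ _ _ => pow_add _ _ _)]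

namespace MvPolynomial

section LineRestriction

variable {R σ : Type*} [CommSemiring R]

theorem derivative_aeval [Fintype σ] (x : σ → Polynomial R) (p : MvPolynomial σ R) :
    Polynomial.derivative (aeval x p) =
      ∑ j, aeval x (pderiv j p) * Polynomial.derivative (x j) := by
  classical
  induction p using MvPolynomial.induction_on with
  | C r => simp
  | add p p' hp hp' => simp [hp, hp', Finset.sum_add_distrib, add_mul]
  | mul_X p i hp =>
    simp only [map_mul, aeval_X, Polynomial.derivative_mul, hp, Derivation.leibniz, pderiv_X,
      Pi.single_apply, apply_ite, smul_eq_mul, mul_one, mul_zero, map_add, map_zero, add_mul,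
      ite_mul, zero_mul, mul_assoc, Finset.sum_add_distrib, Finset.sum_ite_eq, Finset.mem_univ,
      if_true]
    rw [add_comm, Finset.sum_mul]
    exact congrArg _ (Finset.sum_congr rfl fun j _ => by ring)

theorem IsHomogeneous.aeval_smul {S : Type*} [CommSemiring S] [Algebra R S]
    {φ : MvPolynomial σ R} {n : ℕ} (hφ : φ.IsHomogeneous n) (u : S) (x : σ → S) :
    MvPolynomial.aeval (u • x) φ = u ^ n * MvPolynomial.aeval x φ := by
  simp only [aeval_def, eval₂_eq, Finset.mul_sum]
  refine Finset.sum_congr rfl fun e he => ?_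
  simp only [Pi.smul_apply, smul_eq_mul, mul_pow, Finset.prod_mul_distrib,
    Finset.prod_pow_eq_pow_sum, ← hφ.degree_eq_sum_deg_support he]
  ring

noncomputable def lineRestrict (a b : σ → R) : MvPolynomial σ R →ₐ[R] R[X] :=
  aeval fun j => Polynomial.C (a j) * Polynomial.X + Polynomial.C (b j)

variable (a b : σ → R)

theorem aeval_lineRestrict {A : Type*} [CommSemiring A] [Algebra R A] (u : A)
    (g : MvPolynomial σ R) :
    Polynomial.aeval u (lineRestrict a b g) =
      aeval (fun j => u * algebraMap R A (a j) + algebraMap R A (b j)) g := by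
  rw [lineRestrict, ← AlgHom.comp_apply, comp_aeval]
  congr 2 with j
  simp only [map_add, map_mul, Polynomial.aeval_C, Polynomial.aeval_X]
  ring

@[simp]
theorem lineRestrict_X (j : σ) :
    lineRestrict a b (X j) = Polynomial.C (a j) * Polynomial.X + Polynomial.C (b j) :=
  aeval_X _ _

theorem lineRestrict_monomial (e : σ →₀ ℕ) (r : R) :
    lineRestrict a b (monomial e r) = Polynomial.C r *
      (e.toMultiset.map fun j => Polynomial.C (a j) * Polynomial.X + Polynomial.C (b j)).prod := by
  rw [lineRestrict, aeval_monomial, Finsupp.prod_map_toMultiset]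
  rfl

theorem natDegree_lineRestrict_monomial_le (e : σ →₀ ℕ) (r : R) :
    (lineRestrict a b (monomial e r)).natDegree ≤ e.degree := by
  rw [lineRestrict_monomial]
  refine (Polynomial.natDegree_C_mul_le _ _).trans <|
    (Polynomial.natDegree_multiset_prod_le _).trans ?_
  rw [Multiset.map_map]
  refine (Multiset.sum_le_card_nsmul _ 1 ?_).trans ?_
  · simp only [Multiset.mem_map]
    rintro _ ⟨j, -, rfl⟩
    exact Polynomial.natDegree_linear_le
  · simp [Finsupp.degree_apply, Finsupp.sum]

theorem coeff_lineRestrict_monomial (e : σ →₀ ℕ) (r : R) :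
    (lineRestrict a b (monomial e r)).coeff e.degree = eval a (monomial e r) := by
  have hcard : e.degree = Multiset.card (e.toMultiset.map
      fun j => Polynomial.C (a j) * Polynomial.X + Polynomial.C (b j)) * 1 := by
    simp [Finsupp.degree_apply, Finsupp.sum]
  rw [lineRestrict_monomial, Polynomial.coeff_C_mul, hcard,
    Polynomial.coeff_multiset_prod_of_natDegree_le]
  · simp [Multiset.map_map, eval_monomial, Finsupp.prod_map_toMultiset]
  · simp only [Multiset.mem_map]
    rintro _ ⟨j, -, rfl⟩
    exact Polynomial.natDegree_linear_le

theorem IsHomogeneous.natDegree_lineRestrict_le {g : MvPolynomial σ R} {d : ℕ}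
    (hg : g.IsHomogeneous d) : (lineRestrict a b g).natDegree ≤ d := by
  rw [g.as_sum, map_sum]
  refine Polynomial.natDegree_sum_le_of_forall_le _ _ fun e he => ?_
  exact (natDegree_lineRestrict_monomial_le a b e _).trans_eq
    (hg.degree_eq_sum_deg_support he).symm

theorem IsHomogeneous.coeff_lineRestrict {g : MvPolynomial σ R} {d : ℕ}
    (hg : g.IsHomogeneous d) : (lineRestrict a b g).coeff d = eval a g := by
  rw [g.as_sum, map_sum, map_sum, Polynomial.finsetSum_coeff]
  refine Finset.sum_congr rfl fun e he => ?_
  rw [hg.degree_eq_sum_deg_support he, ← Finsupp.degree_apply, coeff_lineRestrict_monomial]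

theorem derivative_lineRestrict [Fintype σ] (g : MvPolynomial σ R) :
    Polynomial.derivative (lineRestrict a b g) =
      ∑ j, Polynomial.C (a j) * lineRestrict a b (pderiv j g) := by
  rw [lineRestrict, derivative_aeval]
  refine Finset.sum_congr rfl fun j _ => ?_
  simp only [Polynomial.derivative_add, Polynomial.derivative_C_mul_X, Polynomial.derivative_C,
    add_zero]
  exact mul_comm _ _

end LineRestriction

section FiniteField

variable {F σ : Type*} [Field F] [Fintype F] {q : ℕ} (hq : Fintype.card F = q)
  {f : MvPolynomial σ F} (hf : f.IsHomogeneous (q + 1)) (hfill : ∀ v, eval v f = 0) (a b : σ → F)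
include hq hf hfill

theorem lineRestrict_eq_C_mul_X_pow_sub_X :
    lineRestrict a b f = Polynomial.C ((lineRestrict a b f).coeff q) *
      (Polynomial.X ^ q - Polynomial.X) := by
  set p := lineRestrict a b f
  have hp : p.natDegree ≤ q := by
    simpa using Polynomial.natDegree_le_pred (hf.natDegree_lineRestrict_le a b)
      (by rw [hf.coeff_lineRestrict]; exact hfill a)
  rw [← sub_eq_zero]
  refine Polynomial.eq_zero_of_natDegree_lt_card_of_eval_eq_zero _ Function.injective_id
    (fun u => ?_) ?_
  · have hpu : p.eval u = 0 := by
      rw [← Polynomial.coe_aeval_eq_eval, aeval_lineRestrict]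
      exact hfill _
    simp [hpu, hq ▸ FiniteField.pow_card u]
  · have hq1 : 1 < q := hq ▸ Fintype.one_lt_card
    have hle : (p - Polynomial.C (p.coeff q) * (Polynomial.X ^ q - Polynomial.X)).natDegree ≤ q :=
      max_self q ▸ Polynomial.natDegree_sub_le_of_le hp <| (Polynomial.natDegree_C_mul_le _ _).trans
        (FiniteField.X_pow_card_sub_X_natDegree_eq F hq1).le
    have := Polynomial.natDegree_le_pred hle (by simp [Polynomial.coeff_X, hq1.ne])
    omega

theorem derivative_lineRestrict_eq_neg_C :
    Polynomial.derivative (lineRestrict a b f) = -Polynomial.C ((lineRestrict a b f).coeff q) := by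
  conv_lhs => rw [lineRestrict_eq_C_mul_X_pow_sub_X hq hf hfill]
  simp [Polynomial.derivative_X_pow, ← hq]

theorem sum_eval_pderiv_mul_eq_coeff_lineRestrict [Fintype σ] :
    ∑ j, eval a (pderiv j f) * b j = (lineRestrict a b f).coeff q := by
  have hderiv := derivative_lineRestrict a b f
  rw [derivative_lineRestrict_eq_neg_C hq hf hfill] at hderiv
  have hrestrict := lineRestrict_eq_C_mul_X_pow_sub_X hq hf hfill a b
  set c := (lineRestrict a b f).coeff q
  have hq0 : (q : F[X]) = 0 := by
    rw [← Polynomial.C_eq_natCast, ← hq, FiniteField.cast_card_eq_zero, map_zero]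
  have heuler : ∑ j, (Polynomial.C (a j) * Polynomial.X + Polynomial.C (b j)) *
      lineRestrict a b (pderiv j f) = lineRestrict a b f := by
    simpa [hq0] using congrArg (lineRestrict a b) hf.sum_X_mul_pderiv
  have hpoly : ∑ j, Polynomial.C (b j) * lineRestrict a b (pderiv j f) =
      Polynomial.C c * Polynomial.X ^ q := by
    calc ∑ j, Polynomial.C (b j) * lineRestrict a b (pderiv j f)
        = lineRestrict a b f -
            Polynomial.X * ∑ j, Polynomial.C (a j) * lineRestrict a b (pderiv j f) := by
          rw [← heuler, Finset.mul_sum, ← Finset.sum_sub_distrib]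
          exact Finset.sum_congr rfl fun j _ => by ring
      _ = Polynomial.C c * Polynomial.X ^ q := by
          rw [← hderiv, hrestrict]
          ring
  have hpderiv : ∀ j, (pderiv j f).IsHomogeneous q := fun j => by simpa using hf.pderiv (i := j)
  have := congrArg (Polynomial.coeff · q) hpoly
  simp only [Polynomial.finsetSum_coeff, Polynomial.coeff_C_mul, Polynomial.coeff_X_pow_self,
    (hpderiv _).coeff_lineRestrict, mul_one] at this
  simpa only [mul_comm] using this

end FiniteField

end MvPolynomial

section Tangency

variable {F : Type*} [Field F] {m : ℕ}

noncomputable def dirDeriv (g : MvPolynomial (Fin m) F) (w : Fin m → F)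
    (v : Fin m → AlgebraicClosure F) : AlgebraicClosure F :=
  ∑ j, evalK F (pderiv j g) v * algebraMap F (AlgebraicClosure F) (w j)

theorem evalK_eq_aeval (g : MvPolynomial (Fin m) F) (v : Fin m → AlgebraicClosure F) :
    evalK F g v = aeval v g := by
  rw [evalK, eval_map, aeval_def]

theorem evalK_algebraMap (g : MvPolynomial (Fin m) F) (x : Fin m → F) :
    evalK F g (algebraMap F (AlgebraicClosure F) ∘ x) =
      algebraMap F (AlgebraicClosure F) (eval x g) := by
  rw [evalK_eq_aeval, aeval_algebraMap_apply]
  rfl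

theorem evalK_linePt_one (a b : Fin m → F) (u : AlgebraicClosure F) (g : MvPolynomial (Fin m) F) :
    evalK F g (linePt F a b u 1) = Polynomial.aeval u (lineRestrict a b g) := by
  rw [evalK_eq_aeval, aeval_lineRestrict]
  congr 2 with i
  simp [linePt]

theorem linePt_zero_right (a b : Fin m → F) (s : AlgebraicClosure F) :
    linePt F a b s 0 = s • (algebraMap F (AlgebraicClosure F) ∘ a) := by
  ext i
  simp [linePt]

theorem linePt_zero_one (a b : Fin m → F) :
    linePt F a b 0 1 = algebraMap F (AlgebraicClosure F) ∘ b := by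
  ext i
  simp [linePt]

theorem linePt_eq_smul (a b : Fin m → F) (s : AlgebraicClosure F) {t : AlgebraicClosure F}
    (ht : t ≠ 0) : linePt F a b s t = t • linePt F a b (s / t) 1 := by
  ext i
  simp only [linePt, Pi.smul_apply, smul_eq_mul]
  field_simp

theorem dirDeriv_smul {g : MvPolynomial (Fin m) F} {d : ℕ} (hg : g.IsHomogeneous (d + 1))
    (w : Fin m → F) (t : AlgebraicClosure F) (v : Fin m → AlgebraicClosure F) :
    dirDeriv g w (t • v) = t ^ d * dirDeriv g w v := by
  simp only [dirDeriv, evalK_eq_aeval, Finset.mul_sum, ← mul_assoc]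
  exact Finset.sum_congr rfl fun j _ => by
    rw [(by simpa using hg.pderiv (i := j) : (pderiv j g).IsHomogeneous d).aeval_smul]

theorem dirDeriv_single (g : MvPolynomial (Fin m) F) (i : Fin m) (v : Fin m → AlgebraicClosure F) :
    dirDeriv g (Pi.single i 1) v = evalK F (pderiv i g) v := by
  simp [dirDeriv, Pi.single_apply, apply_ite]

theorem evalK_zero_of_isHomogeneous {g : MvPolynomial (Fin m) F} {d : ℕ} (hg : g.IsHomogeneous d)
    (hd : d ≠ 0) : evalK F g 0 = 0 := by
  simpa [evalK_eq_aeval, zero_pow hd] using hg.aeval_smul (0 : AlgebraicClosure F) 0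

theorem linearIndependent_of_not_tangentLine {g : MvPolynomial (Fin m) F} {d : ℕ}
    (hg : g.IsHomogeneous d) (hd : 2 ≤ d) {a b : Fin m → F} (h : ¬ TangentLine F g a b) :
    LinearIndependent F ![a, b] := by
  rw [LinearIndependent.pair_iff]
  intro s t hst
  by_contra hne
  have hline : linePt F a b (algebraMap F _ s) (algebraMap F _ t) = 0 := by
    ext i
    simpa [linePt, ← map_mul, ← map_add] using congrFun hst i
  refine h ⟨algebraMap F _ s, algebraMap F _ t, ?_, ?_, Or.inl fun j => ?_⟩
  · exact (not_and_or.mp hne).imp (map_ne_zero _).mpr (map_ne_zero _).mpr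
  · rw [hline]
    exact evalK_zero_of_isHomogeneous hg (by omega)
  · rw [hline]
    exact evalK_zero_of_isHomogeneous hg.pderiv (by omega)

theorem TangentLine.exists_dirDeriv_eq_zero {g : MvPolynomial (Fin m) F} {a b : Fin m → F}
    (h : TangentLine F g a b) : ∃ s t : AlgebraicClosure F, (s ≠ 0 ∨ t ≠ 0) ∧
      dirDeriv g a (linePt F a b s t) = 0 ∧ dirDeriv g b (linePt F a b s t) = 0 := by
  obtain ⟨s, t, hst, -, hsing | htan⟩ := h
  · exact ⟨s, t, hst, by simp [dirDeriv, hsing], by simp [dirDeriv, hsing]⟩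
  · exact ⟨s, t, hst, htan⟩

end Tangency

section FiniteFieldTangency

variable {F : Type*} [Field F] [Fintype F] {m q : ℕ} (hq : Fintype.card F = q)
  {f : MvPolynomial (Fin m) F} (hf : f.IsHomogeneous (q + 1)) (hfill : SpaceFilling F f)
include hq hf hfill

theorem dirDeriv_linePt_one (a b : Fin m → F) (u : AlgebraicClosure F) :
    dirDeriv f a (linePt F a b u 1) =
      -algebraMap F (AlgebraicClosure F) ((lineRestrict a b f).coeff q) := by
  have := congrArg (Polynomial.aeval u) (derivative_lineRestrict_eq_neg_C hq hf hfill a b)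
  rw [derivative_lineRestrict, map_sum] at this
  simpa [dirDeriv, evalK_linePt_one, mul_comm] using this

theorem dirDeriv_linePt_zero (a b : Fin m → F) (s : AlgebraicClosure F) :
    dirDeriv f b (linePt F a b s 0) =
      s ^ q * algebraMap F (AlgebraicClosure F) ((lineRestrict a b f).coeff q) := by
  rw [linePt_zero_right, dirDeriv_smul hf,
    ← sum_eval_pderiv_mul_eq_coeff_lineRestrict hq hf hfill a b]
  simp [dirDeriv, evalK_algebraMap, map_sum]

theorem not_tangentLine_of_coeff_lineRestrict_ne_zero {a b : Fin m → F}
    (hc : (lineRestrict a b f).coeff q ≠ 0) : ¬ TangentLine F f a b := by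
  intro h
  obtain ⟨s, t, hst, hda, hdb⟩ := h.exists_dirDeriv_eq_zero
  have hc' : algebraMap F (AlgebraicClosure F) ((lineRestrict a b f).coeff q) ≠ 0 :=
    (map_ne_zero _).mpr hc
  by_cases ht : t = 0
  · subst ht
    have hs : s ≠ 0 := hst.resolve_right (not_not.mpr rfl)
    rw [dirDeriv_linePt_zero hq hf hfill] at hdb
    exact mul_ne_zero (pow_ne_zero _ hs) hc' hdb
  · rw [linePt_eq_smul a b s ht, dirDeriv_smul hf, dirDeriv_linePt_one hq hf hfill] at hda
    exact mul_ne_zero (pow_ne_zero _ ht) (neg_ne_zero.mpr hc') hda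

end FiniteFieldTangency

theorem notLineTransverseFree_deg_q_add_one_general (q n : ℕ) (F : Type*) [Field F] [Fintype F]
    (hq : Fintype.card F = q)
    (f : MvPolynomial (Fin (n + 1)) F) (hhom : f.IsHomogeneous (q + 1))
    (hfill : SpaceFilling F f) (hsm : SmoothHyp F f) :
    ∃ a b : Fin (n + 1) → F, LinearIndependent F ![a, b] ∧ ¬ TangentLine F f a b := by
  let b : Fin (n + 1) → F := fun _ => 1
  obtain ⟨i, hi⟩ := hsm (algebraMap F _ ∘ b) (fun h => by simpa [b] using congrFun h 0)
    (by rw [evalK_algebraMap, hfill, map_zero])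
  have hc : (lineRestrict (Pi.single i 1) b f).coeff q ≠ 0 := by
    intro hc
    have h := dirDeriv_linePt_one hq hhom hfill (Pi.single i 1) b 0
    rw [hc, map_zero, neg_zero, linePt_zero_one, dirDeriv_single] at h
    exact hi h
  have htr := not_tangentLine_of_coeff_lineRestrict_ne_zero hq hhom hfill hc
  have hq1 : 1 ≤ q := hq ▸ Fintype.card_pos
  exact ⟨_, b, linearIndependent_of_not_tangentLine hhom (by omega) htr, htr⟩

/-- No smooth space-filling hypersurface of degree `q+1` in `ℙⁿ` over `F_q`
is line-transverse-free: there is always an `F_q`-line not tangent to it. -/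
theorem notLineTransverseFree_deg_q_add_one (q n : ℕ) (F : Type*) [Field F] [Fintype F]
    (hq : Fintype.card F = q)
    (f : MvPolynomial (Fin (n + 1)) F) (hf0 : f ≠ 0) (hhom : f.IsHomogeneous (q + 1))
    (hfill : SpaceFilling F f) (hsm : SmoothHyp F f) :
    ∃ a b : Fin (n + 1) → F, LinearIndependent F ![a, b] ∧ ¬ TangentLine F f a b :=
  notLineTransverseFree_deg_q_add_one_general q n F hq f hhom hfill hsm
end

section
/- Let q be an odd prime power and let P, Q be homogeneous quadratic polynomials in two variables over F_q. Then the map from P^1(F_q) to P^1(F_q) given by (x:y) ↦ (P(x,y):Q(x,y)) (assumed well-defined, i.e. P and Q have no common zero over F_q) is not a bijection. -/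
/-!
Write `e₀ = (1 : 0)`, `e₁ = (0 : 1)`. The fibre of `(P : Q)` over the image of `e₀` is the zero set
of the binary quadratic form `H₀ = Q(e₀) P - P(e₀) Q`; injectivity makes `e₀` its only zero, which
forces `H₀ = k₀ y²` with no cross term, and likewise `H₁ = k₁ x²` for `e₁`. As `k₀ ≠ 0`, the values
of `H₀` and `H₁` determine those of `P` and `Q`, and `H₀`, `H₁` are even in `y`, so `(1 : 1)` and
`(1 : -1)` have the same image. They are different points because the characteristic is odd.
-/

open MvPolynomial

namespace MvPolynomial

variable {σ R : Type*}

theorem IsHomogeneous.exists_eval_fin_two_eq [CommSemiring R]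
    {p : MvPolynomial (Fin 2) R} (hp : p.IsHomogeneous 2) :
    ∃ α β γ : R, ∀ v : Fin 2 → R, eval v p = α * v 0 ^ 2 + β * v 0 * v 1 + γ * v 1 ^ 2 := by
  induction hp using IsWeightedHomogeneous.induction_on with
  | zero => exact ⟨0, 0, 0, fun v => by simp⟩
  | add p q _ _ hp hq =>
    obtain ⟨α, β, γ, hp⟩ := hp
    obtain ⟨α', β', γ', hq⟩ := hq
    exact ⟨α + α', β + β', γ + γ', fun v => by rw [eval_add, hp, hq]; ring⟩
  | monomial d r hd =>
    rw [Pi.one_def, ← Finsupp.degree_eq_weight_one, Finsupp.degree_eq_sum, Fin.sum_univ_two] at hd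
    have heval : ∀ v : Fin 2 → R, eval v (monomial d r) = r * v 0 ^ d 0 * v 1 ^ d 1 := by
      intro v
      simp [eval_monomial, Finsupp.prod_fintype, Fin.prod_univ_two, mul_assoc]
    obtain ⟨h0, h1⟩ | ⟨h0, h1⟩ | ⟨h0, h1⟩ :
        d 0 = 2 ∧ d 1 = 0 ∨ d 0 = 1 ∧ d 1 = 1 ∨ d 0 = 0 ∧ d 1 = 2 := by omega
    · exact ⟨r, 0, 0, fun v => by rw [heval, h0, h1]; ring⟩
    · exact ⟨0, r, 0, fun v => by rw [heval, h0, h1]; ring⟩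
    · exact ⟨0, 0, r, fun v => by rw [heval, h0, h1]; ring⟩

variable [CommRing R] {p : MvPolynomial (Fin 2) R}

theorem IsHomogeneous.eval_eq_mul_snd_sq (hp : p.IsHomogeneous 2) (he0 : eval ![1, 0] p = 0)
    (hzero : ∀ v, eval v p = 0 → v 1 = 0) (v : Fin 2 → R) :
    eval v p = eval ![0, 1] p * v 1 ^ 2 := by
  obtain ⟨α, β, γ, hp⟩ := hp.exists_eval_fin_two_eq
  have hα : α = 0 := by simpa [hp] using he0
  have hβ : β = 0 := neg_eq_zero.mp <| hzero ![γ, -β] <| by simp [hp, hα]; ring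
  simp [hp, hα, hβ]

theorem IsHomogeneous.eval_eq_mul_fst_sq (hp : p.IsHomogeneous 2) (he1 : eval ![0, 1] p = 0)
    (hzero : ∀ v, eval v p = 0 → v 0 = 0) (v : Fin 2 → R) :
    eval v p = eval ![1, 0] p * v 0 ^ 2 := by
  obtain ⟨α, β, γ, hp⟩ := hp.exists_eval_fin_two_eq
  have hγ : γ = 0 := by simpa [hp] using he1
  have hβ : β = 0 := neg_eq_zero.mp <| hzero ![-β, α] <| by simp [hp, hγ]; ring
  simp [hp, hγ, hβ]

noncomputable def fiberPoly (P Q : MvPolynomial σ R) (a b : R) : MvPolynomial σ R :=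
  C b * P - C a * Q

@[simp]
theorem eval_fiberPoly (P Q : MvPolynomial σ R) (a b : R) (v : σ → R) :
    eval v (fiberPoly P Q a b) = b * eval v P - a * eval v Q := by
  simp [fiberPoly]

theorem IsHomogeneous.fiberPoly {P Q : MvPolynomial σ R} {n : ℕ} (hP : P.IsHomogeneous n)
    (hQ : Q.IsHomogeneous n) (a b : R) : (fiberPoly P Q a b).IsHomogeneous n :=
  (hP.C_mul b).sub (hQ.C_mul a)

end MvPolynomial

section

variable {F : Type*} [Field F]

theorem FiniteField.two_ne_zero_of_odd_card [Fintype F] (h : Odd (Fintype.card F)) :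
    (2 : F) ≠ 0 :=
  Ring.two_ne_zero fun hchar =>
    Nat.not_even_iff_odd.2 h (Nat.even_iff.2 (FiniteField.even_card_of_char_two hchar))

theorem exists_eq_mul_of_mul_sub_mul_eq_zero {a b x y : F} (hab : a ≠ 0 ∨ b ≠ 0)
    (hxy : x ≠ 0 ∨ y ≠ 0) (h : b * x - a * y = 0) : ∃ c, c ≠ 0 ∧ x = c * a ∧ y = c * b := by
  rcases hab with ha | hb
  · have hx : x ≠ 0 := by rintro rfl; simp_all
    exact ⟨x / a, div_ne_zero hx ha, by field_simp, by field_simp; linear_combination -h⟩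
  · have hy : y ≠ 0 := by rintro rfl; simp_all
    exact ⟨y / b, div_ne_zero hy hb, by field_simp; linear_combination h, by field_simp⟩

theorem eq_and_eq_of_mul_sub_mul_eq {a b a' b' x y x' y' : F} (hdet : b * a' - a * b' ≠ 0)
    (h : b * x - a * y = b * x' - a * y') (h' : b' * x - a' * y = b' * x' - a' * y') :
    x = x' ∧ y = y' :=
  ⟨mul_left_cancel₀ hdet (by linear_combination a' * h - a * h'),
    mul_left_cancel₀ hdet (by linear_combination b' * h - b * h')⟩

def InjectiveOnLines (P Q : MvPolynomial (Fin 2) F) : Prop :=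
  ∀ v v' : Fin 2 → F, v ≠ 0 → v' ≠ 0 →
    (∃ c : F, c ≠ 0 ∧ eval v' P = c * eval v P ∧ eval v' Q = c * eval v Q) →
    ∃ c : F, c ≠ 0 ∧ v' = c • v

theorem InjectiveOnLines.exists_eq_smul_of_eval_fiberPoly_eq_zero
    {P Q : MvPolynomial (Fin 2) F} (hinj : InjectiveOnLines P Q)
    (hwd : ∀ v : Fin 2 → F, v ≠ 0 → (eval v P ≠ 0 ∨ eval v Q ≠ 0)) {u v : Fin 2 → F}
    (hu : u ≠ 0) (hv : eval v (fiberPoly P Q (eval u P) (eval u Q)) = 0) : ∃ c : F, v = c • u := by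
  by_cases hv0 : v = 0
  · exact ⟨0, by simp [hv0]⟩
  obtain ⟨c, -, hc⟩ := hinj u v hu hv0 <|
    exists_eq_mul_of_mul_sub_mul_eq_zero (hwd u hu) (hwd v hv0) (by simpa using hv)
  exact ⟨c, hc⟩

end

/-- For `q` an odd prime power and `P, Q` homogeneous quadratics over `F_q`
with no common zero on `ℙ¹(F_q)`, the induced map `(x:y) ↦ (P(x,y):Q(x,y))` on `ℙ¹(F_q)`
(described here at the level of nonzero vectors, up to scalars) is not a bijection. -/
theorem quadraticMapNotBijective (q : ℕ) (hq : Odd q) (F : Type*) [Field F] [Fintype F]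
    (hcard : Fintype.card F = q)
    (P Q : MvPolynomial (Fin 2) F) (hP : P.IsHomogeneous 2) (hQ : Q.IsHomogeneous 2)
    (hwd : ∀ v : Fin 2 → F, v ≠ 0 → (eval v P ≠ 0 ∨ eval v Q ≠ 0)) :
    ¬ ((∀ v v' : Fin 2 → F, v ≠ 0 → v' ≠ 0 →
          (∃ c : F, c ≠ 0 ∧ eval v' P = c * eval v P ∧ eval v' Q = c * eval v Q) →
          ∃ c : F, c ≠ 0 ∧ v' = c • v) ∧
        (∀ w : Fin 2 → F, w ≠ 0 → ∃ v : Fin 2 → F, v ≠ 0 ∧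
          ∃ c : F, c ≠ 0 ∧ eval v P = c * w 0 ∧ eval v Q = c * w 1)) := by
  rintro ⟨hinj : InjectiveOnLines P Q, -⟩
  have h2 : (2 : F) ≠ 0 := FiniteField.two_ne_zero_of_odd_card (hcard ▸ hq)
  set e₀ : Fin 2 → F := ![1, 0]
  set e₁ : Fin 2 → F := ![0, 1]
  have he₀ : e₀ ≠ 0 := fun h => by simpa [e₀] using congrFun h 0
  have he₁ : e₁ ≠ 0 := fun h => by simpa [e₁] using congrFun h 1
  set H₀ := fiberPoly P Q (eval e₀ P) (eval e₀ Q)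
  set H₁ := fiberPoly P Q (eval e₁ P) (eval e₁ Q)
  have hH₀ : ∀ v, eval v H₀ = eval e₁ H₀ * v 1 ^ 2 :=
    (hP.fiberPoly hQ _ _).eval_eq_mul_snd_sq (by simp; ring) fun v hv => by
      obtain ⟨c, rfl⟩ := hinj.exists_eq_smul_of_eval_fiberPoly_eq_zero hwd he₀ hv
      simp [e₀]
  have hH₁ : ∀ v, eval v H₁ = eval e₀ H₁ * v 0 ^ 2 :=
    (hP.fiberPoly hQ _ _).eval_eq_mul_fst_sq (by simp; ring) fun v hv => by
      obtain ⟨c, rfl⟩ := hinj.exists_eq_smul_of_eval_fiberPoly_eq_zero hwd he₁ hv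
      simp [e₁]
  have hdet : eval e₁ H₀ ≠ 0 := fun h => by
    obtain ⟨c, hc⟩ := hinj.exists_eq_smul_of_eval_fiberPoly_eq_zero hwd he₀ h
    simpa [e₀, e₁] using congrFun hc 1
  obtain ⟨hPeq, hQeq⟩ := eq_and_eq_of_mul_sub_mul_eq (by simpa [H₀] using hdet)
    (by simpa [H₀] using show eval ![1, -1] H₀ = eval ![1, 1] H₀ by rw [hH₀, hH₀ ![1, 1]]; simp)
    (by simpa [H₁] using show eval ![1, -1] H₁ = eval ![1, 1] H₁ by rw [hH₁, hH₁ ![1, 1]]; simp)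
  obtain ⟨c, -, hc⟩ := hinj ![1, 1] ![1, -1] (fun h => by simpa using congrFun h 0)
    (fun h => by simpa using congrFun h 0) ⟨1, one_ne_zero, by simp [hPeq], by simp [hQeq]⟩
  have hc₀ : 1 = c := by simpa using congrFun hc 0
  have hc₁ : -1 = c := by simpa using congrFun hc 1
  exact h2 (by linear_combination hc₀ - hc₁)
end

section
/- Let H be a finite hyperbolic plane of even order q (q(q-1)/2 points, q^2−1 lines, q/2 points per line, q+1 lines per point). Then there exists a blocking set X (a set of points meeting every line) of size at most the ceiling of q(q-1)/2 − (C(q(q-1)/2, q/2)·(q/2)!/(q^2−1))^{2/q}. -/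
/-!
Union bound over the `b` lines: a line of size `k` misses `C(v - k, n)` of the `C(v, n)` sets of
`n` out of `v` points, so if `b · C(v - k, n) < C(v, n)` some `n`-set meets every line. For
`n = v - m`, the identity `C(v, m) · C(m, k) = C(v, k) · C(v - k, m - k)` turns this into
`b · C(m, k) < C(v, k)`, and since `k! · C(m, k) < m ^ k` it suffices that
`m ^ k ≤ C(v, k) · k! / b`, i.e. `m = ⌊(C(v, k) · k! / b) ^ (1 / k)⌋`.
-/

open Finset Nat

def IsBlockingSet {Pt L : Type*} (I : Pt → L → Prop) (X : Finset Pt) : Prop :=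
  ∀ l : L, ∃ p ∈ X, I p l

theorem exists_isBlockingSet_card_eq_of_mul_choose_lt {Pt L : Type*} [Fintype Pt] [Fintype L]
    (I : Pt → L → Prop) {k n : ℕ} (hline : ∀ l : L, Nat.card {p : Pt // I p l} = k)
    (h : Fintype.card L * (Fintype.card Pt - k).choose n < (Fintype.card Pt).choose n) :
    ∃ X : Finset Pt, X.card = n ∧ IsBlockingSet I X := by
  classical
  let missing (l : L) : Finset (Finset Pt) := powersetCard n (univ.filter fun p => ¬ I p l)
  have hmissing (l : L) : (missing l).card = (Fintype.card Pt - k).choose n := by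
    rw [card_powersetCard, ← Fintype.card_subtype, Fintype.card_subtype_compl,
      ← hline l, Nat.card_eq_fintype_card]
  have hcard : (univ.biUnion missing).card < (powersetCard n (univ : Finset Pt)).card :=
    calc (univ.biUnion missing).card ≤ ∑ l, (missing l).card := card_biUnion_le
      _ = Fintype.card L * (Fintype.card Pt - k).choose n := by simp [hmissing]
      _ < _ := by simpa using h
  obtain ⟨X, hX, hXmissing⟩ := exists_mem_notMem_of_card_lt_card hcard
  have hXn := (mem_powersetCard.1 hX).2
  refine ⟨X, hXn, fun l => ?_⟩
  by_contra! hmiss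
  exact hXmissing <| mem_biUnion.2
    ⟨l, mem_univ l, mem_powersetCard.2 ⟨fun p hp => by simpa using hmiss p hp, hXn⟩⟩

theorem Nat.lt_of_mul_choose_lt_choose {b m v k : ℕ} (hb : 0 < b)
    (h : b * m.choose k < v.choose k) : m < v := by
  by_contra! hvm
  have := Nat.choose_le_choose k hvm
  nlinarith

theorem Nat.mul_choose_sub_lt_choose_sub {b m v k : ℕ} (hmv : m ≤ v)
    (h : b * m.choose k < v.choose k) :
    b * (v - k).choose (v - m) < v.choose (v - m) := by
  rcases lt_or_ge m k with hmk | hkm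
  · have hkv : k ≤ v := by
      by_contra! hvk
      simp [Nat.choose_eq_zero_of_lt hvk] at h
    rw [Nat.choose_eq_zero_of_lt (by omega : v - k < v - m), mul_zero]
    exact Nat.choose_pos (Nat.sub_le v m)
  · have hsymm : (v - k).choose (v - m) = (v - k).choose (m - k) := by
      rw [show v - m = v - k - (m - k) by omega, Nat.choose_symm (by omega)]
    have hid : v.choose m * m.choose k = v.choose k * (v - k).choose (m - k) :=
      Nat.choose_mul hkm
    rw [hsymm, Nat.choose_symm hmv]
    refine lt_of_mul_lt_mul_right (a := v.choose k) ?_ (Nat.zero_le _)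
    calc b * (v - k).choose (m - k) * v.choose k = v.choose m * (b * m.choose k) := by
          rw [mul_left_comm, hid]; ring
      _ < v.choose m * v.choose k := Nat.mul_lt_mul_of_pos_left h (Nat.choose_pos hmv)

theorem Nat.mul_choose_lt_of_mul_pow_le {b m k c : ℕ} (hk : 2 ≤ k) (hb : 0 < b) (hc : 0 < c)
    (h : b * m ^ k ≤ c * k !) : b * m.choose k < c := by
  rcases Nat.eq_zero_or_pos m with rfl | hm
  · rwa [Nat.choose_eq_zero_of_lt (by omega), mul_zero]
  refine lt_of_mul_lt_mul_right (a := k !) ?_ (Nat.zero_le _)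
  calc b * m.choose k * k ! = b * m.descFactorial k := by
        rw [Nat.descFactorial_eq_factorial_mul_choose]; ring
    _ < b * m ^ k := Nat.mul_lt_mul_of_pos_left (Nat.descFactorial_lt_pow hm.ne' hk) hb
    _ ≤ c * k ! := h

theorem Nat.mul_choose_floor_rpow_lt {b c k : ℕ} (hk : 2 ≤ k) (hb : 0 < b) (hc : 0 < c) :
    b * (⌊((c : ℝ) * (k ! : ℝ) / b) ^ (k⁻¹ : ℝ)⌋₊).choose k < c := by
  set t : ℝ := ((c : ℝ) * (k ! : ℝ) / b) ^ (k⁻¹ : ℝ)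
  have ht : 0 ≤ t := by positivity
  have htk : t ^ k = c * k ! / b := Real.rpow_inv_natCast_pow (by positivity) (by omega)
  refine Nat.mul_choose_lt_of_mul_pow_le hk hb hc ?_
  have hbR : (0 : ℝ) < b := by exact_mod_cast hb
  have : (b : ℝ) * (⌊t⌋₊ : ℝ) ^ k ≤ c * k ! :=
    calc (b : ℝ) * (⌊t⌋₊ : ℝ) ^ k ≤ b * t ^ k := by gcongr; exact Nat.floor_le ht
      _ = c * k ! := by rw [htk]; field_simp
  exact_mod_cast this

theorem Int.ceil_natCast_sub_eq {t : ℝ} (ht : 0 ≤ t) (N : ℕ) :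
    ⌈(N : ℝ) - t⌉ = N - ⌊t⌋₊ := by
  rw [sub_eq_neg_add, Int.ceil_add_natCast, Int.ceil_neg, Int.natCast_floor_eq_floor ht]
  ring

theorem hyperbolicBlockingSet_general (q : ℕ) (hq4 : 4 ≤ q) (hqe : Even q)
    (Pt L : Type*) [Fintype Pt] [Fintype L] (I : Pt → L → Prop)
    (hP : Fintype.card Pt = q * (q - 1) / 2)
    (hL : Fintype.card L = q ^ 2 - 1)
    (hline : ∀ l : L, Nat.card {p : Pt // I p l} = q / 2) :
    ∃ X : Finset Pt, (∀ l : L, ∃ p ∈ X, I p l) ∧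
      (X.card : ℤ) ≤
        ⌈((q * (q - 1) / 2 : ℕ) : ℝ) -
          ((((q * (q - 1) / 2).choose (q / 2) : ℝ) * (Nat.factorial (q / 2) : ℝ) /
              ((q : ℝ) ^ 2 - 1)) ^ ((2 : ℝ) / (q : ℝ)))⌉ := by
  set k := q / 2
  set N := q * (q - 1) / 2
  have hqk : q = 2 * k := (Nat.two_mul_div_two_of_even hqe).symm
  have hk : 2 ≤ k := by omega
  have hb : 0 < q ^ 2 - 1 := Nat.sub_pos_of_lt (Nat.one_lt_pow two_ne_zero (by omega))
  have hexp : (2 : ℝ) / q = (k : ℝ)⁻¹ := by rw [hqk]; push_cast; field_simp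
  have hden : (q : ℝ) ^ 2 - 1 = ((q ^ 2 - 1 : ℕ) : ℝ) := by
    rw [Nat.cast_sub (by omega)]; push_cast; ring
  have hkN : k ≤ N := Nat.le_div_iff_mul_le two_pos |>.2 <| by
    have := Nat.le_mul_of_pos_right q (show 0 < q - 1 by omega)
    omega
  have hkey := Nat.mul_choose_floor_rpow_lt hk hb (Nat.choose_pos hkN)
  rw [hexp, hden]
  set t : ℝ := (((N.choose k : ℕ) : ℝ) * (k ! : ℝ) / ((q ^ 2 - 1 : ℕ) : ℝ)) ^ (k⁻¹ : ℝ)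
  have hmN : ⌊t⌋₊ ≤ N := (Nat.lt_of_mul_choose_lt_choose hb hkey).le
  obtain ⟨X, hXcard, hX⟩ := exists_isBlockingSet_card_eq_of_mul_choose_lt I (n := N - ⌊t⌋₊)
    hline (by rw [hP, hL]; exact Nat.mul_choose_sub_lt_choose_sub hmN hkey)
  refine ⟨X, hX, ?_⟩
  rw [hXcard, Int.ceil_natCast_sub_eq (by positivity), Nat.cast_sub hmN]

/-- A finite hyperbolic plane of even order `q` (with `q(q-1)/2` points,
`q²−1` lines, `q/2` points per line and `q+1` lines per point) has a blocking set of size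
at most `⌈q(q-1)/2 − (C(q(q-1)/2, q/2)·(q/2)!/(q²−1))^{2/q}⌉`. -/
theorem hyperbolicBlockingSet (q : ℕ) (hq4 : 4 ≤ q) (hqe : Even q)
    (Pt L : Type*) [Fintype Pt] [Fintype L] (I : Pt → L → Prop)
    (hP : Fintype.card Pt = q * (q - 1) / 2)
    (hL : Fintype.card L = q ^ 2 - 1)
    (hline : ∀ l : L, Nat.card {p : Pt // I p l} = q / 2)
    (hpoint : ∀ p : Pt, Nat.card {l : L // I p l} = q + 1) :
    ∃ X : Finset Pt, (∀ l : L, ∃ p ∈ X, I p l) ∧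
      (X.card : ℤ) ≤
        ⌈((q * (q - 1) / 2 : ℕ) : ℝ) -
          ((((q * (q - 1) / 2).choose (q / 2) : ℝ) * (Nat.factorial (q / 2) : ℝ) /
              ((q : ℝ) ^ 2 - 1)) ^ ((2 : ℝ) / (q : ℝ)))⌉ :=
  hyperbolicBlockingSet_general q hq4 hqe Pt L I hP hL hline
end
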